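/- arXiv:1001.1123 — 2 statements merged into one kernel-verified Lean document; each statement's English description precedes it below -/
import Mathlib

section
/- Let ρ > 0 and define r(R) = R^{1-ρ/2}. Let h(z) be the harmonic function in the annulus A = {z : R - r(R) < |z| ≤ R + r(R)} given by h(z) = (R+r(R))^ρ · (log|z| - log(R - r(R)))/(log(R+r(R)) - log(R-r(R))) + (R-r(R))^ρ · (log(R+r(R)) - log|z|)/(log(R+r(R)) - log(R-r(R))). Then there is a constant C, independent of R ≥ R₀, such that for all z in A, | |z|^ρ - h(z) | ≤ C. -/
/-!
In the variable `s = log |z|` the function `|z|^ρ = exp (ρ s)` is convex and `h` is its chord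
over `[log (R - r), log (R + r)]`, so `0 ≤ h - |z|^ρ`; the tangent-line inequality
`exp x * (y - x) ≤ exp y - exp x` bounds the gap by `ρ² δ² (R + r)^ρ / 4`, where
`δ = log (R + r) - log (R - r)`. Since `δ ≤ 4 r / R` and `r² = R^(2 - ρ)`, this is at most
`4 ρ² 2^ρ` once `R ≥ 2^(2/ρ)` (so that `r ≤ R / 2`).
-/

open Real

theorem exp_mul_sub_le_exp_sub_exp (x y : ℝ) : exp x * (y - x) ≤ exp y - exp x := by
  have hexp : exp (y - x) * exp x = exp y := by rw [← exp_add, sub_add_cancel]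
  nlinarith [add_one_le_exp (y - x), exp_pos x]

theorem exp_convex_combination_sub_le {p q x z : ℝ} (hp : 0 ≤ p) (hq : 0 ≤ q) (hpq : p + q = 1)
    (hxz : x ≤ z) :
    p * exp z + q * exp x - exp (q * x + p * z) ≤ p * q * (z - x) ^ 2 * exp z := by
  set y := q * x + p * z
  have hyx : y - x = p * (z - x) := by linear_combination x * hpq
  have hzy : z - y = q * (z - x) := by linear_combination (-z) * hpq
  have hupper : exp z - exp y ≤ exp z * (q * (z - x)) := by
    have := exp_mul_sub_le_exp_sub_exp z y
    rw [← hzy]; linarith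
  have hlower : exp x * (p * (z - x)) ≤ exp y - exp x := hyx ▸ exp_mul_sub_le_exp_sub_exp x y
  have hchord : exp z - exp x ≤ exp z * (z - x) := by
    have := exp_mul_sub_le_exp_sub_exp z x
    linarith
  have hpqzx : 0 ≤ p * q * (z - x) := by have := sub_nonneg.2 hxz; positivity
  calc p * exp z + q * exp x - exp y = p * (exp z - exp y) - q * (exp y - exp x) := by
        linear_combination exp y * hpq
    _ ≤ p * (exp z * (q * (z - x))) - q * (exp x * (p * (z - x))) := by gcongr
    _ = p * q * (z - x) * (exp z - exp x) := by ring
    _ ≤ p * q * (z - x) * (exp z * (z - x)) := by gcongr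
    _ = p * q * (z - x) ^ 2 * exp z := by ring

/-- The function of `log t` that is affine and equals `t ^ ρ` at `t = a` and `t = b`. -/
noncomputable def harmonicMajorant (ρ a b t : ℝ) : ℝ :=
  b ^ ρ * ((log t - log a) / (log b - log a)) + a ^ ρ * ((log b - log t) / (log b - log a))

theorem abs_rpow_sub_harmonicMajorant_le {ρ a b t : ℝ} (hρ : 0 ≤ ρ) (ha : 0 < a) (hat : a ≤ t)
    (htb : t ≤ b) (hab : a < b) :
    |t ^ ρ - harmonicMajorant ρ a b t| ≤ ρ ^ 2 * ((log b - log a) ^ 2 * b ^ ρ) / 4 := by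
  have ht : 0 < t := ha.trans_le hat
  have hδ : 0 < log b - log a := sub_pos.2 (log_lt_log ha hab)
  set p := (log t - log a) / (log b - log a)
  set q := (log b - log t) / (log b - log a)
  have hp : 0 ≤ p := div_nonneg (sub_nonneg.2 (log_le_log ha hat)) hδ.le
  have hq : 0 ≤ q := div_nonneg (sub_nonneg.2 (log_le_log ht htb)) hδ.le
  have hpq : p + q = 1 := by rw [← add_div, div_eq_one_iff_eq hδ.ne']; ring
  have hlogt : log t * ρ = q * (log a * ρ) + p * (log b * ρ) := by
    simp only [p, q]; field_simp; ring
  have hXZ : log a * ρ ≤ log b * ρ := by gcongr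
  have hmajorant : harmonicMajorant ρ a b t = p * exp (log b * ρ) + q * exp (log a * ρ) := by
    rw [harmonicMajorant, rpow_def_of_pos ha, rpow_def_of_pos (ha.trans hab)]; ring
  have hconvex : exp (q * (log a * ρ) + p * (log b * ρ))
      ≤ q * exp (log a * ρ) + p * exp (log b * ρ) :=
    convexOn_exp.2 (Set.mem_univ _) (Set.mem_univ _) hq hp (by rwa [add_comm])
  have hgap := exp_convex_combination_sub_le hp hq hpq hXZ
  have hpq4 : p * q ≤ 1 / 4 := by nlinarith [sq_nonneg (p - q)]
  have hbound : p * q * (log b * ρ - log a * ρ) ^ 2 * exp (log b * ρ)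
      ≤ ρ ^ 2 * ((log b - log a) ^ 2 * b ^ ρ) / 4 := by
    rw [rpow_def_of_pos (ha.trans hab)]
    calc p * q * (log b * ρ - log a * ρ) ^ 2 * exp (log b * ρ)
        = p * q * (ρ ^ 2 * ((log b - log a) ^ 2 * exp (log b * ρ))) := by ring
      _ ≤ 1 / 4 * (ρ ^ 2 * ((log b - log a) ^ 2 * exp (log b * ρ))) := by gcongr
      _ = _ := by ring
  rw [hmajorant, rpow_def_of_pos ht, hlogt, abs_sub_comm, abs_of_nonneg (by linarith)]
  linarith

theorem log_add_sub_log_sub_le {R r : ℝ} (hr : 0 ≤ r) (hrR : 2 * r ≤ R) (hR : 0 < R) :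
    log (R + r) - log (R - r) ≤ 4 * r / R := by
  have hRr : 0 < R - r := by linarith
  calc log (R + r) - log (R - r) = log ((R + r) / (R - r)) :=
        (log_div (by linarith) hRr.ne').symm
    _ ≤ (R + r) / (R - r) - 1 := log_le_sub_one_of_pos (by positivity)
    _ = 2 * r / (R - r) := by field_simp; ring
    _ ≤ 4 * r / R := by
        rw [div_le_div_iff₀ hRr hR]
        nlinarith

theorem rpow_one_sub_half_le_half {ρ R : ℝ} (hρ : 0 < ρ) (hR : 2 ^ (2 / ρ) ≤ R) :
    R ^ (1 - ρ / 2) ≤ R / 2 := by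
  have hRpos : 0 < R := (rpow_pos_of_pos two_pos _).trans_le hR
  have htwo : 2 ≤ R ^ (ρ / 2) := by
    calc (2 : ℝ) = (2 ^ (2 / ρ)) ^ (ρ / 2) := by
          rw [← rpow_mul zero_le_two, show 2 / ρ * (ρ / 2) = 1 by field_simp, rpow_one]
      _ ≤ R ^ (ρ / 2) := by gcongr
  rw [rpow_sub hRpos, rpow_one]
  gcongr

theorem sq_log_add_sub_log_sub_mul_rpow_le {ρ R : ℝ} (hρ : 0 < ρ) (hR : 2 ^ (2 / ρ) ≤ R) :
    (log (R + R ^ (1 - ρ / 2)) - log (R - R ^ (1 - ρ / 2))) ^ 2 * (R + R ^ (1 - ρ / 2)) ^ ρ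
      ≤ 16 * 2 ^ ρ := by
  have hRpos : 0 < R := (rpow_pos_of_pos two_pos _).trans_le hR
  set r := R ^ (1 - ρ / 2)
  have hr : 0 < r := rpow_pos_of_pos hRpos _
  have hrR : r ≤ R / 2 := rpow_one_sub_half_le_half hρ hR
  have hδ : 0 ≤ log (R + r) - log (R - r) :=
    sub_nonneg.2 (log_le_log (by linarith) (by linarith))
  have hr_sq : r ^ 2 * R ^ ρ = R ^ 2 := by
    rw [← rpow_natCast, ← rpow_mul hRpos.le, ← rpow_add hRpos]
    norm_num [sub_mul, div_mul_cancel₀]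
  calc (log (R + r) - log (R - r)) ^ 2 * (R + r) ^ ρ ≤ (4 * r / R) ^ 2 * (2 * R) ^ ρ := by
        gcongr
        · exact log_add_sub_log_sub_le hr.le (by linarith) hRpos
        · linarith
    _ = 16 * 2 ^ ρ * (r ^ 2 * R ^ ρ) / R ^ 2 := by
        rw [mul_rpow zero_le_two hRpos.le]; ring
    _ = 16 * 2 ^ ρ := by rw [hr_sq]; field_simp

/-- the minimal harmonic majorant of `|z|^ρ` in the annulus
`A = {z : R - r(R) < |z| ≤ R + r(R)}`, `r(R) = R^{1-ρ/2}`, differs from `|z|^ρ`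
by a bounded quantity, uniformly for large `R`. -/
theorem harmonic_majorant_annulus_bound (ρ : ℝ) (hρ : 0 < ρ) :
    ∃ R₀ C : ℝ, 0 < C ∧ ∀ R : ℝ, R₀ ≤ R → ∀ z : ℂ,
      R - R ^ (1 - ρ / 2) < ‖z‖ → ‖z‖ ≤ R + R ^ (1 - ρ / 2) →
      |‖z‖ ^ ρ -
        ((R + R ^ (1 - ρ / 2)) ^ ρ *
            ((Real.log (‖z‖) - Real.log (R - R ^ (1 - ρ / 2))) /
              (Real.log (R + R ^ (1 - ρ / 2)) - Real.log (R - R ^ (1 - ρ / 2)))) +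
         (R - R ^ (1 - ρ / 2)) ^ ρ *
            ((Real.log (R + R ^ (1 - ρ / 2)) - Real.log (‖z‖)) /
              (Real.log (R + R ^ (1 - ρ / 2)) - Real.log (R - R ^ (1 - ρ / 2)))))| ≤ C := by
  refine ⟨2 ^ (2 / ρ), 4 * ρ ^ 2 * 2 ^ ρ, by positivity, fun R hR z hz₁ hz₂ => ?_⟩
  have hRpos : 0 < R := (rpow_pos_of_pos two_pos _).trans_le hR
  have hr : 0 < R ^ (1 - ρ / 2) := rpow_pos_of_pos hRpos _
  have hrR := rpow_one_sub_half_le_half hρ hR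
  calc |‖z‖ ^ ρ - harmonicMajorant ρ (R - R ^ (1 - ρ / 2)) (R + R ^ (1 - ρ / 2)) ‖z‖|
      ≤ ρ ^ 2 * ((log (R + R ^ (1 - ρ / 2)) - log (R - R ^ (1 - ρ / 2))) ^ 2
          * (R + R ^ (1 - ρ / 2)) ^ ρ) / 4 :=
        abs_rpow_sub_harmonicMajorant_le hρ.le (by linarith) hz₁.le hz₂ (by linarith)
    _ ≤ ρ ^ 2 * (16 * 2 ^ ρ) / 4 := by gcongr ρ ^ 2 * ?_ / 4; exact sq_log_add_sub_log_sub_mul_rpow_le hρ hR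
    _ = 4 * ρ ^ 2 * 2 ^ ρ := by ring
end

section
/- Let E be a measurable subset of ℂ such that for every b with |b| sufficiently large, m₂(E ∩ D(b, |b|^{1-ρ/2+ε/2})) ≥ C |b|^χ for constants C > 0, χ ∈ ℝ, 0 < ρ < 2, 0 < ε < ρ. Then there exists a constant C' > 0 such that for all sufficiently large R, m₂(E ∩ {z : R ≤ |z| < 2R}) ≥ C' R^{χ + ρ - ε}. -/
/-!
Place an `n × n` square grid of spacing `s ≍ R^{1-δ}`, `δ = (ρ - ε)/2`, inside the disk
`D(3R/2, R/2)`, which lies in the annulus `R ≤ |z| < 2R`. Since `|b| ≍ R` on the annulus, each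
disk `D(b, |b|^{1-δ})` around a grid point has radius at most `s/2`, so these disks are
pairwise disjoint and each carries mass `≳ R^χ` of `E`. With `n ≍ R^δ` there are
`≍ R^{2δ} = R^{ρ-ε}` of them.
-/

open MeasureTheory Metric Filter

open Complex in
def gridPoint (c : ℂ) (s : ℝ) (p : ℕ × ℕ) : ℂ := c + s * (p.1 + p.2 * I)

theorem measure_inter_biUnion_finset {α ι : Type*} [MeasurableSpace α] (μ : Measure α)
    (E : Set α) (T : Finset ι) {B : ι → Set α} (hd : (T : Set ι).PairwiseDisjoint B)
    (hm : ∀ i, MeasurableSet (B i)) :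
    μ (E ∩ ⋃ i ∈ T, B i) = ∑ i ∈ T, μ (E ∩ B i) := by
  -- `E` need not be measurable: restricting `μ` to the disjoint measurable pieces splits it.
  rw [← Measure.restrict_apply' (Finset.measurableSet_biUnion T fun i _ => hm i),
    Measure.restrict_biUnion_finset hd hm, Measure.sum_apply_of_countable,
    ← Finset.tsum_subtype T fun i => μ (E ∩ B i)]
  simp only [Measure.restrict_apply' (hm _)]

theorem one_le_abs_natCast_sub {m k : ℕ} (h : m ≠ k) : (1 : ℝ) ≤ |(m : ℝ) - k| := by
  have := Int.one_le_abs (sub_ne_zero.2 (Int.natCast_inj.not.2 h))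
  exact_mod_cast this

theorem le_dist_gridPoint (c : ℂ) {s : ℝ} (hs : 0 ≤ s) {p q : ℕ × ℕ} (hpq : p ≠ q) :
    s ≤ dist (gridPoint c s p) (gridPoint c s q) := by
  have hre : |(gridPoint c s p - gridPoint c s q).re| = s * |(p.1 : ℝ) - q.1| := by
    simp [gridPoint, ← mul_sub, abs_mul, abs_of_nonneg hs]
  have him : |(gridPoint c s p - gridPoint c s q).im| = s * |(p.2 : ℝ) - q.2| := by
    simp [gridPoint, ← mul_sub, abs_mul, abs_of_nonneg hs]
  rw [dist_eq_norm]
  rcases not_and_or.1 (mt Prod.ext_iff.2 hpq) with h | h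
  · calc s ≤ s * |(p.1 : ℝ) - q.1| := le_mul_of_one_le_right hs (one_le_abs_natCast_sub h)
      _ ≤ _ := hre ▸ Complex.abs_re_le_norm _
  · calc s ≤ s * |(p.2 : ℝ) - q.2| := le_mul_of_one_le_right hs (one_le_abs_natCast_sub h)
      _ ≤ _ := him ▸ Complex.abs_im_le_norm _

theorem dist_gridPoint_le (c : ℂ) {s : ℝ} (hs : 0 ≤ s) {n : ℕ} {p : ℕ × ℕ}
    (hp : p ∈ Finset.range n ×ˢ Finset.range n) : dist (gridPoint c s p) c ≤ 2 * n * s := by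
  simp only [Finset.mem_product, Finset.mem_range] at hp
  have h1 : (p.1 : ℝ) ≤ n := by exact_mod_cast hp.1.le
  have h2 : (p.2 : ℝ) ≤ n := by exact_mod_cast hp.2.le
  rw [dist_eq_norm]
  calc ‖gridPoint c s p - c‖ ≤ |(gridPoint c s p - c).re| + |(gridPoint c s p - c).im| :=
        Complex.norm_le_abs_re_add_abs_im _
    _ = s * p.1 + s * p.2 := by simp [gridPoint, abs_of_nonneg hs]
    _ ≤ 2 * n * s := by nlinarith

def dyadicAnnulus (R : ℝ) : Set ℂ := {z : ℂ | R ≤ ‖z‖ ∧ ‖z‖ < 2 * R}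

theorem ball_subset_dyadicAnnulus {R : ℝ} (hR : 0 ≤ R) :
    ball ((3 / 2 * R : ℝ) : ℂ) (R / 2) ⊆ dyadicAnnulus R := by
  intro z hz
  rw [mem_ball, dist_eq_norm] at hz
  have hc : ‖((3 / 2 * R : ℝ) : ℂ)‖ = 3 / 2 * R := by
    rw [Complex.norm_real, Real.norm_of_nonneg (by positivity)]
  have h₁ := norm_sub_norm_le z ((3 / 2 * R : ℝ) : ℂ)
  have h₂ := norm_sub_norm_le ((3 / 2 * R : ℝ) : ℂ) z
  rw [norm_sub_rev] at h₂
  constructor <;> linarith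

theorem min_one_two_rpow_mul_rpow_le {R x : ℝ} (χ : ℝ) (hR : 0 < R) (h₁ : R ≤ x)
    (h₂ : x ≤ 2 * R) : min 1 (2 ^ χ) * R ^ χ ≤ x ^ χ := by
  rcases le_or_gt 0 χ with hχ | hχ
  · calc min 1 (2 ^ χ) * R ^ χ ≤ 1 * R ^ χ := by gcongr; exact min_le_left _ _
      _ ≤ x ^ χ := by rw [one_mul]; exact Real.rpow_le_rpow hR.le h₁ hχ
  · calc min 1 (2 ^ χ) * R ^ χ ≤ 2 ^ χ * R ^ χ := by gcongr; exact min_le_right _ _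
      _ = (2 * R) ^ χ := (Real.mul_rpow zero_le_two hR.le).symm
      _ ≤ x ^ χ := Real.rpow_le_rpow_of_nonpos (hR.trans_le h₁) h₂ hχ.le

theorem rpow_le_two_mul_rpow {R x κ : ℝ} (hR : 0 < R) (h₁ : R ≤ x) (h₂ : x ≤ 2 * R)
    (hκ : κ ≤ 1) : x ^ κ ≤ 2 * R ^ κ := by
  rcases le_or_gt 0 κ with h | h
  · calc x ^ κ ≤ (2 * R) ^ κ := Real.rpow_le_rpow (hR.le.trans h₁) h₂ h
      _ = 2 ^ κ * R ^ κ := Real.mul_rpow zero_le_two hR.le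
      _ ≤ 2 * R ^ κ := by
        gcongr
        simpa using Real.rpow_le_rpow_of_exponent_le one_le_two hκ
  · have := Real.rpow_le_rpow_of_nonpos hR h₁ h.le
    linarith [Real.rpow_pos_of_pos hR κ]

theorem card_sq_mul_le_measure_inter_dyadicAnnulus (μ : Measure ℂ) (E : Set ℂ) {R s : ℝ}
    (hs : 0 < s) {n : ℕ} (hn : 2 * n * s + s / 2 ≤ R / 2) {a : ENNReal}
    (ha : ∀ b : ℂ, R ≤ ‖b‖ → ‖b‖ ≤ 2 * R → a ≤ μ (E ∩ ball b (s / 2))) :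
    n ^ 2 * a ≤ μ (E ∩ dyadicAnnulus R) := by
  have hR : 0 ≤ R := by
    have : 0 ≤ 2 * (n : ℝ) * s := by positivity
    linarith
  set c : ℂ := ((3 / 2 * R : ℝ) : ℂ)
  set F := Finset.range n ×ˢ Finset.range n
  have hsub : ∀ p ∈ F, ball (gridPoint c s p) (s / 2) ⊆ dyadicAnnulus R :=
    fun p hp => (ball_subset_ball' (by linarith [dist_gridPoint_le c hs.le hp])).trans
      (ball_subset_dyadicAnnulus hR)
  have hdisj : (F : Set (ℕ × ℕ)).PairwiseDisjoint fun p => ball (gridPoint c s p) (s / 2) :=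
    fun p _ q _ hpq => ball_disjoint_ball (by linarith [le_dist_gridPoint c hs.le hpq])
  calc (n : ENNReal) ^ 2 * a = ∑ p ∈ F, a := by simp [F, sq]
    _ ≤ ∑ p ∈ F, μ (E ∩ ball (gridPoint c s p) (s / 2)) := by
      refine Finset.sum_le_sum fun p hp => ?_
      obtain ⟨h₁, h₂⟩ := hsub p hp (mem_ball_self (half_pos hs))
      exact ha _ h₁ h₂.le
    _ = μ (E ∩ ⋃ p ∈ F, ball (gridPoint c s p) (s / 2)) :=
      (measure_inter_biUnion_finset μ E F hdisj fun _ => measurableSet_ball).symm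
    _ ≤ μ (E ∩ dyadicAnnulus R) :=
      measure_mono (Set.inter_subset_inter_right _ (Set.iUnion₂_subset hsub))

theorem le_measure_inter_dyadicAnnulus (μ : Measure ℂ) [IsFiniteMeasureOnCompacts μ]
    (E : Set ℂ) {C χ δ R : ℝ} (hC : 0 ≤ C) (hδ : 0 ≤ δ) (hR : 0 < R)
    (hRδ : 64 ≤ R ^ δ) (hdisk : ∀ b : ℂ, R ≤ ‖b‖ → ‖b‖ ≤ 2 * R →
      C * ‖b‖ ^ χ ≤ (μ (E ∩ ball b (‖b‖ ^ (1 - δ)))).toReal) :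
    C * min 1 (2 ^ χ) / 4096 * R ^ (χ + 2 * δ) ≤ (μ (E ∩ dyadicAnnulus R)).toReal := by
  set m : ℝ := min 1 (2 ^ χ)
  set t := R ^ δ
  set u := R ^ (1 - δ)
  -- grid spacing `4u`, at least twice every disk radius, with `⌊t / 32⌋` points per side
  set n := ⌊t / 32⌋₊
  have hu : 0 < u := Real.rpow_pos_of_pos hR _
  have hut : u * t = R := by rw [← Real.rpow_add hR]; simp
  have hn_le : (n : ℝ) ≤ t / 32 := Nat.floor_le (by positivity)
  have hn_ge : t / 64 ≤ n := by linarith [Nat.sub_one_lt_floor (t / 32)]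
  have hfit : 2 * n * (4 * u) + 4 * u / 2 ≤ R / 2 := by
    nlinarith [mul_le_mul_of_nonneg_right hn_le hu.le, mul_le_mul_of_nonneg_left hRδ hu.le]
  have hball : ∀ b : ℂ, R ≤ ‖b‖ → ‖b‖ ≤ 2 * R →
      ENNReal.ofReal (C * m * R ^ χ) ≤ μ (E ∩ ball b (4 * u / 2)) := by
    intro b h₁ h₂
    have hrad : ‖b‖ ^ (1 - δ) ≤ 4 * u / 2 := by
      linarith [rpow_le_two_mul_rpow (κ := 1 - δ) hR h₁ h₂ (by linarith)]
    refine ENNReal.ofReal_le_of_le_toReal ?_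
    calc C * m * R ^ χ ≤ C * ‖b‖ ^ χ := by
          rw [mul_assoc]; gcongr; exact min_one_two_rpow_mul_rpow_le χ hR h₁ h₂
      _ ≤ (μ (E ∩ ball b (‖b‖ ^ (1 - δ)))).toReal := hdisk b h₁ h₂
      _ ≤ (μ (E ∩ ball b (4 * u / 2))).toReal :=
        ENNReal.toReal_mono
          (measure_mono Set.inter_subset_right |>.trans_lt measure_ball_lt_top).ne
          (measure_mono (Set.inter_subset_inter_right _ (ball_subset_ball hrad)))
  have hfin : μ (E ∩ dyadicAnnulus R) ≠ ⊤ :=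
    (measure_mono (fun z hz => mem_ball_zero_iff.2 hz.2.2) |>.trans_lt
      (measure_ball_lt_top (x := 0) (r := 2 * R))).ne
  have hmass : 0 ≤ C * m * R ^ χ := by positivity
  calc C * m / 4096 * R ^ (χ + 2 * δ) = (t / 64) ^ 2 * (C * m * R ^ χ) := by
        rw [two_mul, ← add_assoc, Real.rpow_add hR, Real.rpow_add hR]; ring
    _ ≤ n ^ 2 * (C * m * R ^ χ) := by gcongr
    _ = ((n : ENNReal) ^ 2 * ENNReal.ofReal (C * m * R ^ χ)).toReal := by
        simp [ENNReal.toReal_ofReal hmass]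
    _ ≤ (μ (E ∩ dyadicAnnulus R)).toReal := ENNReal.toReal_mono hfin
        (card_sq_mul_le_measure_inter_dyadicAnnulus μ E (by positivity) hfit hball)

theorem disk_to_annulus_measure_bound_general
    (E : Set ℂ)
    (C χ ρ ε : ℝ) (hC : 0 < C) (hερ : ε < ρ)
    (R₀ : ℝ)
    (hdisk : ∀ b : ℂ, R₀ ≤ ‖b‖ →
      C * ‖b‖ ^ χ ≤
        (volume (E ∩ ball b (‖b‖ ^ (1 - ρ / 2 + ε / 2)))).toReal) :
    ∃ C' R₁ : ℝ, 0 < C' ∧ ∀ R : ℝ, R₁ ≤ R →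
      C' * R ^ (χ + ρ - ε) ≤
        (volume (E ∩ {z : ℂ | R ≤ ‖z‖ ∧ ‖z‖ < 2 * R})).toReal := by
  set δ := (ρ - ε) / 2
  have hδ : 0 < δ := half_pos (sub_pos.2 hερ)
  have hκ : 1 - ρ / 2 + ε / 2 = 1 - δ := by ring
  obtain ⟨R₁, hR₁⟩ := eventually_atTop.1 <| (eventually_gt_atTop 0).and <|
    (eventually_ge_atTop R₀).and <| (tendsto_rpow_atTop hδ).eventually_ge_atTop 64
  refine ⟨C * min 1 (2 ^ χ) / 4096, R₁, by positivity, fun R hR => ?_⟩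
  obtain ⟨hR, hR₀, hRδ⟩ := hR₁ R hR
  have := le_measure_inter_dyadicAnnulus volume E hC.le hδ.le hR hRδ fun b h₁ _ =>
    hκ ▸ hdisk b (hR₀.trans h₁)
  rwa [show χ + 2 * δ = χ + ρ - ε by ring] at this

/-- if every disk `D(b, |b|^{1-ρ/2+ε/2})` with `|b|` large captures
planar measure at least `C |b|^χ` of `E`, then
`m₂(E ∩ {R ≤ |z| < 2R}) ≥ C' R^{χ+ρ-ε}` for all large `R`. -/
theorem disk_to_annulus_measure_bound
    (E : Set ℂ) (hE : MeasurableSet E)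
    (C χ ρ ε : ℝ) (hC : 0 < C) (hρ0 : 0 < ρ) (hρ2 : ρ < 2) (hε0 : 0 < ε) (hερ : ε < ρ)
    (R₀ : ℝ)
    (hdisk : ∀ b : ℂ, R₀ ≤ ‖b‖ →
      C * ‖b‖ ^ χ ≤
        (volume (E ∩ ball b (‖b‖ ^ (1 - ρ / 2 + ε / 2)))).toReal) :
    ∃ C' R₁ : ℝ, 0 < C' ∧ ∀ R : ℝ, R₁ ≤ R →
      C' * R ^ (χ + ρ - ε) ≤
        (volume (E ∩ {z : ℂ | R ≤ ‖z‖ ∧ ‖z‖ < 2 * R})).toReal :=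
  disk_to_annulus_measure_bound_general E C χ ρ ε hC hερ R₀ hdisk
end
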